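/- Let 𝖬 ∈ ℝ^{3×3} be symmetric and define 𝖬̄ := (1/2)(tr(𝖬)I₃ − 𝖬). Then for every R ∈ SO(3), ψ(𝖬R)ᵀψ(R) = ψ(R)ᵀ 𝖬̄ ψ(R). In particular, if 𝖬̄ is positive definite with smallest eigenvalue λ_m > 0, then ψ(𝖬R)ᵀψ(R) ≥ λ_m ‖ψ(R)‖² for all R ∈ SO(3). -/

import Mathlib

/-!
Both sides of the identity are quadratic in the entries of `R` and linear in the symmetric
matrix `𝖬`; their difference is a linear combination of the entries of `R Rᵀ - Rᵀ R`, so the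
identity holds for every normal `R`, in particular for every rotation. The lower bound then
follows because `𝖬̄ - λ_m I₃` is positive semidefinite.
-/

open Matrix

noncomputable section

def SO3 (R : Matrix (Fin 3) (Fin 3) ℝ) : Prop :=
  R * Rᵀ = 1 ∧ Rᵀ * R = 1 ∧ R.det = 1

def psiMap (A : Matrix (Fin 3) (Fin 3) ℝ) : Fin 3 → ℝ :=
  ![(A 2 1 - A 1 2) / 2, (A 0 2 - A 2 0) / 2, (A 1 0 - A 0 1) / 2]

lemma Matrix.IsHermitian.mul_sum_sq_le_dotProduct_mulVec {n : Type*} [Fintype n] [DecidableEq n]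
    {A : Matrix n n ℝ} (hA : A.IsHermitian) {c : ℝ} (hc : ∀ i, c ≤ hA.eigenvalues i)
    (x : n → ℝ) : c * ∑ i, x i ^ 2 ≤ x ⬝ᵥ (A *ᵥ x) := by
  have hshift : (A - c • 1).PosSemidef := by
    refine posSemidef_iff_isHermitian_and_spectrum_nonneg.mpr ⟨?_, ?_⟩
    · exact hA.sub (isHermitian_one.smul (IsSelfAdjoint.all c))
    · rw [← Algebra.algebraMap_eq_smul_one, ← spectrum.sub_singleton_eq,
        hA.spectrum_real_eq_range_eigenvalues]
      rintro _ ⟨_, ⟨i, rfl⟩, _, rfl, rfl⟩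
      exact sub_nonneg.mpr (hc i)
  have hquad := hshift.dotProduct_mulVec_nonneg x
  simp only [star_trivial, sub_mulVec, dotProduct_sub, smul_mulVec, one_mulVec, dotProduct_smul,
    smul_eq_mul, sub_nonneg] at hquad
  simpa [dotProduct, sq] using hquad

lemma psiMap_mul_dotProduct_psiMap_of_normal {M R : Matrix (Fin 3) (Fin 3) ℝ} (hM : Mᵀ = M)
    (hR : R * Rᵀ = Rᵀ * R) :
    psiMap (M * R) ⬝ᵥ psiMap R =
      psiMap R ⬝ᵥ (((1 / 2 : ℝ) • (M.trace • (1 : Matrix (Fin 3) (Fin 3) ℝ) - M)) *ᵥ psiMap R) := by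
  have hsymm (i j : Fin 3) : M j i = M i j := by rw [← transpose_apply M i j, hM]
  have hnormal (i j : Fin 3) := congrFun₂ hR i j
  simp only [mul_apply, Fin.sum_univ_three, transpose_apply] at hnormal
  simp only [psiMap, dotProduct, mulVec, mul_apply, Fin.sum_univ_three, trace, diag,
    Matrix.smul_apply, Matrix.sub_apply, one_apply, Fin.isValue, cons_val_zero, cons_val_one,
    cons_val_two, hsymm 0 1, hsymm 0 2, hsymm 1 2, ↓reduceIte, Fin.reduceEq, smul_eq_mul,
    mul_one, mul_zero, tail_cons, head_cons]
  linear_combination (norm := ring_nf)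
    (M 0 0 - M 2 2) / 8 * hnormal 0 0 + M 0 1 / 4 * hnormal 0 1 + M 0 2 / 4 * hnormal 0 2 +
      (M 1 1 - M 2 2) / 8 * hnormal 1 1 + M 1 2 / 4 * hnormal 1 2

/-- `ψ(𝖬R)ᵀψ(R) = ψ(R)ᵀ𝖬̄ψ(R)` with `𝖬̄ = (tr(𝖬)I₃ - 𝖬)/2`; in
particular if `𝖬̄` is positive definite with smallest eigenvalue `λ_m > 0`, then
`ψ(𝖬R)ᵀψ(R) ≥ λ_m ‖ψ(R)‖²`. -/
theorem psi_quadratic_form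
    (Mmat : Matrix (Fin 3) (Fin 3) ℝ) (hMsym : Mmatᵀ = Mmat)
    (Mbar : Matrix (Fin 3) (Fin 3) ℝ)
    (hMbar : Mbar = (1/2 : ℝ) • (Matrix.trace Mmat • (1 : Matrix (Fin 3) (Fin 3) ℝ) - Mmat)) :
    (∀ R : Matrix (Fin 3) (Fin 3) ℝ, SO3 R →
      psiMap (Mmat * R) ⬝ᵥ psiMap R = psiMap R ⬝ᵥ (Mbar *ᵥ psiMap R)) ∧
    (∀ lm : ℝ, 0 < lm → Mbar.PosDef →
      ∀ (hHerm : Mbar.IsHermitian),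
        ((∀ i, lm ≤ hHerm.eigenvalues i) ∧ (∃ i, hHerm.eigenvalues i = lm)) →
      ∀ R : Matrix (Fin 3) (Fin 3) ℝ, SO3 R →
        lm * ∑ i, (psiMap R i) ^ 2 ≤ psiMap (Mmat * R) ⬝ᵥ psiMap R) := by
  subst hMbar
  have hidentity (R : Matrix (Fin 3) (Fin 3) ℝ) (hR : SO3 R) :=
    psiMap_mul_dotProduct_psiMap_of_normal hMsym (hR.1.trans hR.2.1.symm)
  refine ⟨hidentity, ?_⟩
  rintro lm - - hHerm ⟨hlb, -⟩ R hR
  rw [hidentity R hR]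
  exact hHerm.mul_sum_sq_le_dotProduct_mulVec hlb _
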